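/- Let G be any group, n ≥ 3, E the set of idempotents of End F_n(G), and IG(E) the free idempotent generated monoid over E. Let e ∈ End F_n(G) be any idempotent of rank 1 and let H̄ = {w ∈ IG(E) : w H ē} be the H-class of ē in IG(E) (the maximal subgroup of IG(E) containing ē). Then H̄ is closed under the multiplication of IG(E), and there is a bijection φ : H̄ → G such that φ(w w') = φ(w)·φ(w') for all w, w' ∈ H̄ and φ(ē) = 1; in particular, H̄ with the induced multiplication is a group isomorphic to G. Thus every group arises as a maximal subgroup of the free idempotent generated semigroup over the biordered set of idempotents of the endomorphism monoid of a finite-rank free group act. -/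

import Mathlib

/-- An endomorphism of the rank-`n` free left `G`-act `F_n(G) = G × Fin n`
(the formal symbols `g x_i` are the pairs `(g, i)`), where the action is
`h • (g, i) = (h * g, i)` and equivariance says `(h • x) a = h • (x a)`. -/
structure ActEnd (G : Type*) [Group G] (n : ℕ) : Type _ where
  toFun : G × Fin n → G × Fin n
  equivariant : ∀ (h : G) (x : G × Fin n),
    toFun (h * x.1, x.2) = (h * (toFun x).1, (toFun x).2)

namespace ActEnd

variable {G : Type*} [Group G] {n : ℕ}

/-- Composition is written left-to-right: `x (a * b) = (x a) b`. -/
instance : Monoid (ActEnd G n) where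
  mul a b := ⟨fun x => b.toFun (a.toFun x), by
    intro h x
    try dsimp only
    rw [a.equivariant h x, b.equivariant]⟩
  one := ⟨id, fun _ _ => rfl⟩
  mul_assoc _ _ _ := rfl
  one_mul _ := rfl
  mul_one _ := rfl

@[simp] theorem mul_toFun (a b : ActEnd G n) (x : G × Fin n) :
    (a * b).toFun x = b.toFun (a.toFun x) := rfl

theorem ext' {a b : ActEnd G n} (h : a.toFun = b.toFun) : a = b := by
  cases a; cases b; cases h; rfl

/-- The rank of an endomorphism of `F_n(G)`: the number of indices `j` such
that `G x_j` meets the image. -/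
noncomputable def rank (a : ActEnd G n) : ℕ :=
  Nat.card {j : Fin n // ∃ x, (a.toFun x).2 = j}

end ActEnd

/-- The principal left ideal `M a` of `a`. -/
def lIdeal {M : Type*} [Monoid M] (a : M) : Set M := Set.range fun m => m * a

/-- The principal right ideal `a M` of `a`. -/
def rIdeal {M : Type*} [Monoid M] (a : M) : Set M := Set.range fun m => a * m

/-- The `H`-class of `e`: all elements that are both `L`- and `R`-related to `e`. -/
def hClass {M : Type*} [Monoid M] (e : M) : Set M :=
  {a | lIdeal a = lIdeal e ∧ rIdeal a = rIdeal e}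

/-- The defining relation of the free idempotent generated monoid `IG(E)`:
`ē f̄ = (e f)‾` whenever `{e, f} ∩ {e f, f e} ≠ ∅`. -/
def igRel (M : Type*) [Monoid M] :
    FreeMonoid {e : M // e * e = e} → FreeMonoid {e : M // e * e = e} → Prop :=
  fun x y => ∃ e f g : {e : M // e * e = e},
    (e.1 * f.1 = e.1 ∨ e.1 * f.1 = f.1 ∨ f.1 * e.1 = e.1 ∨ f.1 * e.1 = f.1) ∧
    e.1 * f.1 = g.1 ∧
    x = FreeMonoid.of e * FreeMonoid.of f ∧ y = FreeMonoid.of g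

/-- The free idempotent generated monoid over the biordered set of idempotents
of `M`: the presented monoid with generators `ē` for each idempotent `e` and
relations `ē f̄ = (e f)‾` whenever `{e, f} ∩ {e f, f e} ≠ ∅`. -/
abbrev IG (M : Type*) [Monoid M] : Type _ := (conGen (igRel M)).Quotient

/-- The generator `ē` of `IG(E)` corresponding to the idempotent `e`. -/
def ebar {M : Type*} [Monoid M] (e : {e : M // e * e = e}) : IG M :=
  (conGen (igRel M)).mk' (FreeMonoid.of e)

/-!
Write `e = ε(a, k)` for the rank-one idempotent `x_i ↦ a_i x_k`, and let `std g m` be the rank-one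
idempotent fixing `x_m` and sending every other `x_i` to `g x_m`. Every element of `ē · IG(E)`
equals a normal form `ē · std h m` (`m ≠ k`) or `ē · std h l · std 1 k` (`m = k`, for a fixed
`l ≠ k`): right multiplication by a generator maps normal forms to normal forms. This is checked
using only the relations `x̄ ȳ = (x u)‾ ȳ` (for `u x = x`, `u y = y`) and their mirror images,
obtained by inserting a suitable idempotent `u` between two letters; finding `u` needs a third
index, whence `n ≥ 3`. The projection `IG(E) → End F_n(G)` sends the normal form indexed by
`(h, m)` to `x_i ↦ a_i h x_m`, so it separates them. Hence the `H`-class of `ē` consists of the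
normal forms with `m = k`, these multiply like `G`, and the coefficient of `x_k` in the projection
is the isomorphism.
-/

theorem Fin.exists_ne_and_ne {n : ℕ} (hn : 3 ≤ n) (x y : Fin n) : ∃ z, z ≠ x ∧ z ≠ y := by
  obtain ⟨z, -, hz⟩ := Finset.exists_mem_notMem_of_card_lt_card (s := {x, y})
    (t := Finset.univ) (by simpa using (Finset.card_le_two).trans_lt (by omega))
  exact ⟨z, by simpa [not_or] using hz⟩

section Green

variable {M : Type*} [Monoid M] {x y : M}

theorem mem_lIdeal_self (x : M) : x ∈ lIdeal x := ⟨1, one_mul x⟩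

theorem mem_rIdeal_self (x : M) : x ∈ rIdeal x := ⟨1, mul_one x⟩

theorem lIdeal_subset_lIdeal (h : x ∈ lIdeal y) : lIdeal x ⊆ lIdeal y := by
  obtain ⟨p, rfl⟩ := h
  rintro _ ⟨m, rfl⟩
  exact ⟨m * p, mul_assoc m p y⟩

theorem rIdeal_subset_rIdeal (h : x ∈ rIdeal y) : rIdeal x ⊆ rIdeal y := by
  obtain ⟨p, rfl⟩ := h
  rintro _ ⟨m, rfl⟩
  exact ⟨p * m, (mul_assoc y p m).symm⟩

theorem lIdeal_eq_lIdeal_iff : lIdeal x = lIdeal y ↔ x ∈ lIdeal y ∧ y ∈ lIdeal x :=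
  ⟨fun h => ⟨h ▸ mem_lIdeal_self x, h ▸ mem_lIdeal_self y⟩,
    fun h => (lIdeal_subset_lIdeal h.1).antisymm (lIdeal_subset_lIdeal h.2)⟩

theorem rIdeal_eq_rIdeal_iff : rIdeal x = rIdeal y ↔ x ∈ rIdeal y ∧ y ∈ rIdeal x :=
  ⟨fun h => ⟨h ▸ mem_rIdeal_self x, h ▸ mem_rIdeal_self y⟩,
    fun h => (rIdeal_subset_rIdeal h.1).antisymm (rIdeal_subset_rIdeal h.2)⟩

end Green

namespace IG

variable {M : Type*} [Monoid M]

abbrev Idem (M : Type*) [Monoid M] := {e : M // e * e = e}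

theorem ebar_mul_ebar {e f g : Idem M}
    (h : e.1 * f.1 = e.1 ∨ e.1 * f.1 = f.1 ∨ f.1 * e.1 = e.1 ∨ f.1 * e.1 = f.1)
    (hg : e.1 * f.1 = g.1) : ebar e * ebar f = ebar g :=
  (Con.eq _).2 (ConGen.Rel.of _ _ ⟨e, f, g, h, hg, rfl, rfl⟩)

theorem ebar_mul_ebar_of_mul_eq_left {e f : Idem M} (h : e.1 * f.1 = e.1) :
    ebar e * ebar f = ebar e :=
  ebar_mul_ebar (Or.inl h) h

theorem ebar_mul_ebar_of_mul_eq_right {e f : Idem M} (h : e.1 * f.1 = f.1) :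
    ebar e * ebar f = ebar f :=
  ebar_mul_ebar (Or.inr (Or.inl h)) h

theorem ebar_mul_ebar_eq_ebar_mul_left {x y u z : Idem M} (hux : u.1 * x.1 = x.1)
    (huy : u.1 * y.1 = y.1) (hxu : x.1 * u.1 = z.1) : ebar x * ebar y = ebar z * ebar y :=
  calc ebar x * ebar y = ebar x * ebar u * ebar y := by
        rw [mul_assoc, ebar_mul_ebar_of_mul_eq_right huy]
    _ = ebar z * ebar y := by rw [ebar_mul_ebar (Or.inr (Or.inr (Or.inl hux))) hxu]

theorem ebar_mul_ebar_eq_ebar_mul_right {x y u z : Idem M} (hxu : x.1 * u.1 = x.1)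
    (hyu : y.1 * u.1 = y.1) (huy : u.1 * y.1 = z.1) : ebar x * ebar y = ebar x * ebar z :=
  calc ebar x * ebar y = ebar x * (ebar u * ebar y) := by
        rw [← mul_assoc, ebar_mul_ebar_of_mul_eq_left hxu]
    _ = ebar x * ebar z := by rw [ebar_mul_ebar (Or.inr (Or.inr (Or.inr hyu))) huy]

def proj : IG M →* M :=
  Con.lift _ (FreeMonoid.lift Subtype.val) <| Con.conGen_le.2 <| by
    rintro _ _ ⟨e, f, g, -, hg, rfl, rfl⟩
    simpa using hg

@[simp] theorem proj_ebar (e : Idem M) : proj (ebar e) = e.1 := rfl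

theorem mul_mem_of_mul_ebar_mem {S : Set (IG M)} (hS : ∀ s ∈ S, ∀ e, s * ebar e ∈ S) :
    ∀ s ∈ S, ∀ x, s * x ∈ S := by
  intro s hs x
  induction x using Con.induction_on with | H w => ?_
  induction w using FreeMonoid.inductionOn' generalizing s with
  | one => simpa using hs
  | of_mul e w ih =>
    rw [Con.coe_mul, ← mul_assoc]
    exact ih _ (hS s hs e)

end IG

namespace ActEnd

open IG

variable {G : Type*} [Group G] {n : ℕ}

def ofBasis (b : Fin n → G) (τ : Fin n → Fin n) : ActEnd G n :=
  ⟨fun x => (x.1 * b x.2, τ x.2), fun h x => by simp [mul_assoc]⟩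

@[simp] theorem ofBasis_toFun (b : Fin n → G) (τ : Fin n → Fin n) (x : G × Fin n) :
    (ofBasis b τ).toFun x = (x.1 * b x.2, τ x.2) := rfl

@[simp] theorem ofBasis_mul_ofBasis (b c : Fin n → G) (τ υ : Fin n → Fin n) :
    ofBasis b τ * ofBasis c υ = ofBasis (fun i => b i * c (τ i)) (fun i => υ (τ i)) :=
  ext' <| funext fun x => by simp [mul_assoc]

theorem ofBasis_inj {b c : Fin n → G} {τ υ : Fin n → Fin n} :
    ofBasis b τ = ofBasis c υ ↔ b = c ∧ τ = υ := by
  refine ⟨fun h => ?_, fun h => h.1 ▸ h.2 ▸ rfl⟩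
  have h' i := congrArg (fun u => u.toFun (1, i)) h
  simp only [ofBasis_toFun, one_mul, Prod.mk.injEq] at h'
  exact ⟨funext fun i => (h' i).1, funext fun i => (h' i).2⟩

def coeff (u : ActEnd G n) (i : Fin n) : G := (u.toFun (1, i)).1

def idx (u : ActEnd G n) (i : Fin n) : Fin n := (u.toFun (1, i)).2

@[simp] theorem coeff_ofBasis (b : Fin n → G) (τ : Fin n → Fin n) : (ofBasis b τ).coeff = b :=
  funext fun _ => one_mul _

@[simp] theorem idx_ofBasis (b : Fin n → G) (τ : Fin n → Fin n) : (ofBasis b τ).idx = τ := rfl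

theorem ofBasis_coeff_idx (u : ActEnd G n) : ofBasis u.coeff u.idx = u :=
  ext' <| funext fun x => by
    simpa [coeff, idx] using (u.equivariant x.1 (1, x.2)).symm

theorem ofBasis_mul_self {b : Fin n → G} {τ : Fin n → Fin n} (hτ : ∀ i, τ (τ i) = τ i)
    (hb : ∀ i, b (τ i) = 1) : ofBasis b τ * ofBasis b τ = ofBasis b τ := by
  simp [hτ, hb]

theorem coeff_idx_of_mul_self {u : ActEnd G n} (hu : u * u = u) (i : Fin n) :
    u.coeff (u.idx i) = 1 := by
  rw [← ofBasis_coeff_idx u, ofBasis_mul_ofBasis, ofBasis_inj] at hu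
  simpa using congrFun hu.1 i

def rankOne (c : Fin n → G) (m : Fin n) (hc : c m = 1) : Idem (ActEnd G n) :=
  ⟨ofBasis c fun _ => m, ofBasis_mul_self (fun _ => rfl) fun _ => hc⟩

def stdVec (g : G) (m : Fin n) (i : Fin n) : G := if i = m then 1 else g

@[simp] theorem stdVec_self (g : G) (m : Fin n) : stdVec g m m = 1 := if_pos rfl

theorem stdVec_of_ne {g : G} {m i : Fin n} (h : i ≠ m) : stdVec g m i = g := if_neg h

@[simp] theorem stdVec_one (m : Fin n) : stdVec (1 : G) m = fun _ => 1 :=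
  funext fun _ => ite_self 1

def std (g : G) (m : Fin n) : Idem (ActEnd G n) := rankOne (stdVec g m) m (stdVec_self g m)

def retract (m m' : Fin n) : Idem (ActEnd G n) :=
  ⟨ofBasis 1 fun i => if i = m' then m' else m,
    ofBasis_mul_self (fun i => by split_ifs <;> simp_all) fun _ => rfl⟩

/-- Inserted between two letters, it moves the target of the first one from `m` to `p`. -/
def collapse (g : G) {m p k : Fin n} (hmp : m ≠ p) (hmk : m ≠ k) : Idem (ActEnd G n) :=
  ⟨ofBasis (fun i => if i = m then g else 1) fun i => if i = m ∨ i = p then p else k,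
    ofBasis_mul_self (fun i => by grind) fun i => by grind⟩

@[simp] theorem coe_rankOne (c : Fin n → G) (m : Fin n) (hc : c m = 1) :
    (rankOne c m hc).1 = ofBasis c fun _ => m := rfl

@[simp] theorem coe_std (g : G) (m : Fin n) :
    (std g m).1 = ofBasis (stdVec g m) fun _ => m := rfl

@[simp] theorem coe_retract (m m' : Fin n) :
    (retract m m').1 = ofBasis (1 : Fin n → G) fun i => if i = m' then m' else m := rfl

@[simp] theorem coe_collapse (g : G) {m p k : Fin n} (hmp : m ≠ p) (hmk : m ≠ k) :
    (collapse g hmp hmk).1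
      = ofBasis (fun i => if i = m then g else 1) fun i => if i = m ∨ i = p then p else k :=
  rfl

theorem ebar_rankOne_mul_ebar_rankOne_self (c d : Fin n → G) (m : Fin n) (hc : c m = 1)
    (hd : d m = 1) : ebar (rankOne c m hc) * ebar (rankOne d m hd) = ebar (rankOne c m hc) :=
  ebar_mul_ebar_of_mul_eq_left <| by simp [hd]

theorem ebar_std_mul_ebar_std_self (h g : G) (m : Fin n) :
    ebar (std h m) * ebar (std g m) = ebar (std h m) :=
  ebar_rankOne_mul_ebar_rankOne_self _ _ _ _ _

theorem ebar_rankOne_mul_ebar_rankOne (c d : Fin n → G) (m m' : Fin n) (hc : c m = 1)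
    (hd : d m' = 1) : ebar (rankOne c m hc) * ebar (rankOne d m' hd)
      = ebar (rankOne c m hc) * ebar (std (d m) m') := by
  by_cases hm : m' = m
  · subst hm
    rw [ebar_rankOne_mul_ebar_rankOne_self, hd, std, ebar_rankOne_mul_ebar_rankOne_self]
  refine ebar_mul_ebar_eq_ebar_mul_right (u := retract m m') ?_ ?_ ?_
  · simp [Ne.symm hm]
  · simp
  · simp only [coe_std, coe_rankOne, coe_retract, ofBasis_mul_ofBasis, ofBasis_inj, and_true]
    ext i
    by_cases hi : i = m' <;> simp [hi, hd, stdVec_of_ne]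

theorem ebar_rankOne_mul_ebar_rankOne_congr {c d d' : Fin n → G} {m m' : Fin n} (hc : c m = 1)
    (hd : d m' = 1) (hd' : d' m' = 1) (h : d m = d' m) :
    ebar (rankOne c m hc) * ebar (rankOne d m' hd)
      = ebar (rankOne c m hc) * ebar (rankOne d' m' hd') := by
  rw [ebar_rankOne_mul_ebar_rankOne, ebar_rankOne_mul_ebar_rankOne _ d', h]

theorem ebar_rankOne_mul_ebar (c : Fin n → G) (m : Fin n) (hc : c m = 1)
    (w : Idem (ActEnd G n)) : ebar (rankOne c m hc) * ebar w
      = ebar (rankOne c m hc) * ebar (std (w.1.coeff m) (w.1.idx m)) := by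
  have hw := ofBasis_coeff_idx w.1
  -- `t` is absorbed by the first letter and satisfies `w t = t`, so `t̄ w̄` is the letter `t w`.
  set t := rankOne (fun i => w.1.coeff i * (w.1.coeff m)⁻¹) m (mul_inv_cancel _)
  set r := rankOne w.1.coeff (w.1.idx m) (coeff_idx_of_mul_self w.2 m)
  have hwt : w.1 * t.1 = t.1 := by
    rw [← hw]
    simp [t, coeff_idx_of_mul_self w.2]
  have htw : t.1 * w.1 = r.1 := by
    rw [← hw]
    simp [t, r]
  calc ebar (rankOne c m hc) * ebar w = ebar (rankOne c m hc) * (ebar t * ebar w) := by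
        rw [← mul_assoc, ebar_rankOne_mul_ebar_rankOne_self]
    _ = ebar (rankOne c m hc) * ebar r := by
        rw [ebar_mul_ebar (Or.inr (Or.inr (Or.inl hwt))) htw]
    _ = _ := by rw [ebar_rankOne_mul_ebar_rankOne]

theorem ebar_std_mul_ebar (g : G) (m : Fin n) (w : Idem (ActEnd G n)) :
    ebar (std g m) * ebar w = ebar (std g m) * ebar (std (w.1.coeff m) (w.1.idx m)) :=
  ebar_rankOne_mul_ebar _ _ _ w

theorem ebar_std_one_mul_ebar_std {k m p : Fin n} (hkm : k ≠ m) (hpm : p ≠ m) (g : G) :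
    ebar (std (1 : G) k) * ebar (std g m) = ebar (std 1 p) * ebar (std g m) := by
  refine ebar_mul_ebar_eq_ebar_mul_left (u := retract p m) ?_ ?_ ?_
  · simp
  · simp only [coe_std, coe_retract, ofBasis_mul_ofBasis, ofBasis_inj, and_true,
      Pi.one_apply, one_mul]
    ext i
    grind [stdVec]
  · simp [hkm]

theorem exists_eq_rankOne {e : ActEnd G n} (he : e * e = e) (hre : e.rank = 1) :
    ∃ a k hak, (⟨e, he⟩ : Idem (ActEnd G n)) = rankOne a k hak := by
  obtain ⟨⟨k, x, hx⟩, hk⟩ := Nat.card_eq_one_iff_exists.1 hre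
  have hidx : e.idx = fun _ => k :=
    funext fun i => congrArg Subtype.val (hk ⟨e.idx i, (1, i), rfl⟩)
  have hak : e.coeff k = 1 := by
    simpa [show e.idx x.2 = k by rw [hidx]] using coeff_idx_of_mul_self he x.2
  refine ⟨e.coeff, k, hak, Subtype.ext ?_⟩
  rw [coe_rankOne, ← hidx, ofBasis_coeff_idx]

section NormalForm

variable {a : Fin n → G} {k : Fin n} (hak : a k = 1)

local notation "ē" => ebar (rankOne a k hak)

theorem ebar_mul_ebar_std_mul_eq_of_collapse_mul {m p : Fin n} (hmk : m ≠ k) (hpk : p ≠ k)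
    (hmp : m ≠ p) (g h : G) (y : Idem (ActEnd G n)) (hy : (collapse g hmp hmk).1 * y.1 = y.1) :
    ē * ebar (std h m) * ebar y = ē * ebar (std (h * g) p) * ebar y := by
  -- `c` has the same `k`-entry as `stdVec h m`, so `ē` cannot tell the two letters apart,
  -- and it is chosen so that `collapse g` fixes `rankOne c m hc` on the left.
  set c : Fin n → G := fun i => if i = m then 1 else if i = p then g⁻¹ else h
  have hc : c m = 1 := if_pos rfl
  set c' : Fin n → G := fun i => c i * g
  have hc' : c' p = 1 := by simp [c', c, hmp.symm]
  have hck : c k = h := by simp [c, hmk.symm, hpk.symm]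
  have h₁ : ē * ebar (std h m) = ē * ebar (rankOne c m hc) := by
    rw [ebar_rankOne_mul_ebar_rankOne, hck]
  have h₂ : ebar (rankOne c m hc) * ebar y = ebar (rankOne c' p hc') * ebar y := by
    refine ebar_mul_ebar_eq_ebar_mul_left (u := collapse g hmp hmk) ?_ hy ?_
    · simp only [coe_rankOne, coe_collapse, ofBasis_mul_ofBasis, ofBasis_inj, and_true]
      ext i
      by_cases him : i = m
      · simp [him, c, hmp.symm]
      · by_cases hip : i = p <;> simp [him, hip, c, hmp.symm, hmk.symm, hpk.symm]
    · simp [c']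
  have h₃ : ē * ebar (rankOne c' p hc') = ē * ebar (std (h * g) p) := by
    rw [ebar_rankOne_mul_ebar_rankOne, show c' k = h * g by rw [← hck]]
  rw [h₁, mul_assoc, h₂, ← mul_assoc, h₃]

theorem ebar_mul_ebar_std_mul_ebar_std {m p : Fin n} (hmk : m ≠ k) (hpk : p ≠ k) (hmp : m ≠ p)
    (g h : G) : ē * ebar (std h m) * ebar (std g p) = ē * ebar (std (h * g) p) := by
  rw [ebar_mul_ebar_std_mul_eq_of_collapse_mul hak hmk hpk hmp g h, mul_assoc,
    ebar_std_mul_ebar_std_self]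
  simp only [coe_std, coe_collapse, ofBasis_mul_ofBasis, ofBasis_inj, and_true]
  ext i
  grind [stdVec]

theorem ebar_mul_ebar_std_mul_ebar_std_base_of_ne {m p : Fin n} (hmk : m ≠ k) (hpk : p ≠ k)
    (hmp : m ≠ p) (g h : G) :
    ē * ebar (std h m) * ebar (std g k) = ē * ebar (std (h * g) p) * ebar (std 1 k) := by
  set d : Fin n → G := fun i => if i = m then g else 1
  have hd : d k = 1 := if_neg hmk.symm
  have h₁ : ebar (std h m) * ebar (std g k) = ebar (std h m) * ebar (rankOne d k hd) :=
    ebar_rankOne_mul_ebar_rankOne_congr _ _ _ (by simp [d, stdVec_of_ne hmk])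
  have h₂ : ebar (std (h * g) p) * ebar (rankOne d k hd)
      = ebar (std (h * g) p) * ebar (std 1 k) :=
    ebar_rankOne_mul_ebar_rankOne_congr _ _ _ (by simp [d, hmp.symm])
  rw [mul_assoc, h₁, ← mul_assoc, ebar_mul_ebar_std_mul_eq_of_collapse_mul hak hmk hpk hmp g h,
    mul_assoc, h₂, ← mul_assoc]
  simp only [coe_rankOne, coe_collapse, ofBasis_mul_ofBasis, ofBasis_inj, and_true]
  ext i
  grind

theorem ebar_mul_ebar_std_mul_ebar_std_base {m p : Fin n} (hn : 3 ≤ n) (hmk : m ≠ k)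
    (hpk : p ≠ k) (g h : G) :
    ē * ebar (std h m) * ebar (std g k) = ē * ebar (std (h * g) p) * ebar (std 1 k) := by
  by_cases hmp : m = p
  · subst hmp
    obtain ⟨j, hjk, hjm⟩ := Fin.exists_ne_and_ne hn k m
    rw [ebar_mul_ebar_std_mul_ebar_std_base_of_ne hak hmk hjk (Ne.symm hjm),
      ebar_mul_ebar_std_mul_ebar_std_base_of_ne hak hjk hmk hjm, mul_one]
  · exact ebar_mul_ebar_std_mul_ebar_std_base_of_ne hak hmk hpk hmp g h

theorem ebar_mul_ebar_std_mul_ebar_std_one_mul_ebar_std {l m : Fin n} (hn : 3 ≤ n)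
    (hlk : l ≠ k) (hmk : m ≠ k) (g h : G) :
    ē * ebar (std h l) * ebar (std 1 k) * ebar (std g m) = ē * ebar (std (h * g) m) := by
  obtain ⟨p, hpk, hpm⟩ := Fin.exists_ne_and_ne hn k m
  have h₁ : ē * ebar (std h l) * ebar (std 1 p) = ē * ebar (std h p) := by
    by_cases hpl : p = l
    · subst hpl
      rw [mul_assoc, ebar_std_mul_ebar_std_self]
    · rw [ebar_mul_ebar_std_mul_ebar_std hak hlk hpk (Ne.symm hpl), mul_one]
  rw [mul_assoc _ (ebar (std 1 k)), ebar_std_one_mul_ebar_std (Ne.symm hmk) hpm, ← mul_assoc, h₁,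
    ebar_mul_ebar_std_mul_ebar_std hak hpk hmk hpm]

/-- For `m = k` a third letter is needed, as `ē * ebar (std h k) = ē`. -/
def normalForm (l : Fin n) (h : G) (m : Fin n) : IG (ActEnd G n) :=
  if m = k then ē * ebar (std h l) * ebar (std 1 k) else ē * ebar (std h m)

variable {l : Fin n}

theorem normalForm_self (h : G) :
    normalForm hak l h k = ē * ebar (std h l) * ebar (std 1 k) := if_pos rfl

theorem normalForm_of_ne (h : G) {m : Fin n} (hm : m ≠ k) :
    normalForm hak l h m = ē * ebar (std h m) := if_neg hm

theorem normalForm_one_self : normalForm hak l 1 k = ē := by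
  rw [normalForm_self, mul_assoc, ebar_mul_ebar_of_mul_eq_right (by simp),
    ebar_mul_ebar_of_mul_eq_left (by simp)]

theorem proj_normalForm (hlk : l ≠ k) (h : G) (m : Fin n) :
    proj (normalForm hak l h m) = ofBasis (fun i => a i * h) fun _ => m := by
  unfold normalForm
  split_ifs with hm
  · subst hm
    simp [stdVec_of_ne hlk.symm]
  · simp [stdVec_of_ne (Ne.symm hm)]

theorem normalForm_mul_ebar_eq (h : G) (m : Fin n) (w : Idem (ActEnd G n)) :
    normalForm hak l h m * ebar w
      = normalForm hak l h m * ebar (std (w.1.coeff m) (w.1.idx m)) := by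
  unfold normalForm
  split_ifs with hm
  · subst hm; rw [mul_assoc, ebar_std_mul_ebar, ← mul_assoc]
  · rw [mul_assoc, ebar_std_mul_ebar, ← mul_assoc]

variable (hn : 3 ≤ n) (hlk : l ≠ k)
include hn hlk

theorem normalForm_mul_ebar_std (h g : G) {m m' : Fin n} (hg : m' = m → g = 1) :
    normalForm hak l h m * ebar (std g m') = normalForm hak l (h * g) m' := by
  by_cases hm' : m' = m
  · subst hm'
    rw [hg rfl, mul_one]
    unfold normalForm
    split_ifs with hm
    · subst hm; rw [mul_assoc, ebar_std_mul_ebar_std_self]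
    · rw [mul_assoc, ebar_std_mul_ebar_std_self]
  by_cases hmk : m = k
  · subst hmk
    rw [normalForm_self, normalForm_of_ne _ _ hm',
      ebar_mul_ebar_std_mul_ebar_std_one_mul_ebar_std hak hn hlk hm']
  · rw [normalForm_of_ne _ _ hmk]
    by_cases hm'k : m' = k
    · subst hm'k
      rw [normalForm_self, ebar_mul_ebar_std_mul_ebar_std_base hak hn hmk hlk]
    · rw [normalForm_of_ne _ _ hm'k, ebar_mul_ebar_std_mul_ebar_std hak hmk hm'k (Ne.symm hm')]

theorem normalForm_mul_ebar (h : G) (m : Fin n) (w : Idem (ActEnd G n)) :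
    normalForm hak l h m * ebar w = normalForm hak l (h * w.1.coeff m) (w.1.idx m) := by
  rw [normalForm_mul_ebar_eq, normalForm_mul_ebar_std hak hn hlk]
  intro hm
  simpa [hm] using coeff_idx_of_mul_self w.2 m

theorem exists_mul_eq_normalForm (x : IG (ActEnd G n)) :
    ∃ h m, ē * x = normalForm hak l h m := by
  have := IG.mul_mem_of_mul_ebar_mem (S := Set.range fun p : G × Fin n => normalForm hak l p.1 p.2)
    ?_ _ ⟨(1, k), normalForm_one_self hak⟩ x
  · obtain ⟨⟨h, m⟩, hx⟩ := this
    exact ⟨h, m, hx.symm⟩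
  · rintro _ ⟨⟨h, m⟩, rfl⟩ w
    exact ⟨(_, _), (normalForm_mul_ebar hak hn hlk h m w).symm⟩

theorem normalForm_mul_normalForm (h h' : G) :
    normalForm hak l h k * normalForm hak l h' k = normalForm hak l (h * h') k := by
  rw [normalForm_self hak h']
  simp only [← mul_assoc, normalForm_mul_ebar hak hn hlk]
  simp [stdVec_of_ne hlk.symm, hak]

theorem normalForm_mem_hClass (h : G) : normalForm hak l h k ∈ hClass ē := by
  have hinv : normalForm hak l h⁻¹ k * normalForm hak l h k = ē := by
    rw [normalForm_mul_normalForm hak hn hlk, inv_mul_cancel, normalForm_one_self]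
  have hinv' : normalForm hak l h k * normalForm hak l h⁻¹ k = ē := by
    rw [normalForm_mul_normalForm hak hn hlk, mul_inv_cancel, normalForm_one_self]
  have hmul : normalForm hak l h k * ē = normalForm hak l h k := by
    simp [normalForm_mul_ebar hak hn hlk, hak]
  refine ⟨lIdeal_eq_lIdeal_iff.2 ⟨⟨_, hmul⟩, ⟨_, hinv⟩⟩,
    rIdeal_eq_rIdeal_iff.2 ⟨⟨ebar (std h l) * ebar (std 1 k), ?_⟩, ⟨_, hinv'⟩⟩⟩
  rw [normalForm_self, mul_assoc]

theorem exists_eq_normalForm_of_mem_hClass {w : IG (ActEnd G n)} (hw : w ∈ hClass ē) :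
    ∃ h, w = normalForm hak l h k := by
  obtain ⟨r, rfl : ē * r = w⟩ := (rIdeal_eq_rIdeal_iff.1 hw.2).1
  obtain ⟨q, hq : q * (ē * r) = ē⟩ := (lIdeal_eq_lIdeal_iff.1 hw.1).2
  obtain ⟨h, m, hrm⟩ := exists_mul_eq_normalForm hak hn hlk r
  rw [hrm] at hq ⊢
  -- `q * normalForm hak l h m` maps into `G x_m`, while `ē` maps into `G x_k`.
  have hm := congrArg (fun u => (proj u).idx k) hq
  rw [map_mul, ← ofBasis_coeff_idx (proj q), proj_normalForm hak hlk] at hm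
  simp only [ofBasis_mul_ofBasis, idx_ofBasis, proj_ebar, coe_rankOne] at hm
  exact ⟨h, by rw [hm]⟩

theorem hClass_eq_range : hClass ē = Set.range fun h => normalForm hak l h k := by
  ext w
  refine ⟨fun hw => ?_, ?_⟩
  · obtain ⟨h, rfl⟩ := exists_eq_normalForm_of_mem_hClass hak hn hlk hw
    exact ⟨h, rfl⟩
  · rintro ⟨h, rfl⟩
    exact normalForm_mem_hClass hak hn hlk h

end NormalForm

end ActEnd

open ActEnd IG

/-- For any group `G`, `n ≥ 3` and any rank-1 idempotent `e` of `End F_n(G)`,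
the `H`-class of `ē` in `IG(E)` is closed under multiplication, and there is a
bijection `φ` from it onto `G` that is multiplicative and sends `ē` to `1`:
the maximal subgroup of `IG(E)` at `ē` is isomorphic to `G`.  Thus every group
arises as a maximal subgroup of the free idempotent generated semigroup over
the biordered set of idempotents of the endomorphism monoid of a finite-rank
free group act. -/
theorem stmt19 {G : Type*} [Group G] {n : ℕ} (hn : 3 ≤ n)
    (e : ActEnd G n) (he : e * e = e) (hre : ActEnd.rank e = 1) :
    (∀ w ∈ hClass (ebar ⟨e, he⟩), ∀ w' ∈ hClass (ebar ⟨e, he⟩),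
        w * w' ∈ hClass (ebar ⟨e, he⟩)) ∧
    ∃ φ : IG (ActEnd G n) → G,
      Set.BijOn φ (hClass (ebar ⟨e, he⟩)) Set.univ ∧
      (∀ w ∈ hClass (ebar ⟨e, he⟩), ∀ w' ∈ hClass (ebar ⟨e, he⟩),
        φ (w * w') = φ w * φ w') ∧
      φ (ebar ⟨e, he⟩) = 1 := by
  obtain ⟨a, k, hak, he'⟩ := exists_eq_rankOne he hre
  obtain ⟨l, hlk, -⟩ := Fin.exists_ne_and_ne hn k k
  have hφ (h : G) : (proj (normalForm hak l h k)).coeff k = h := by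
    simp [proj_normalForm hak hlk, hak]
  rw [he', hClass_eq_range hak hn hlk]
  refine ⟨?_, fun x => (proj x).coeff k, ?_, ?_, ?_⟩
  · rintro _ ⟨h, rfl⟩ _ ⟨h', rfl⟩
    exact ⟨h * h', (normalForm_mul_normalForm hak hn hlk h h').symm⟩
  · refine Set.InvOn.bijOn (f' := fun h => normalForm hak l h k) ⟨?_, fun h _ => hφ h⟩
      (fun _ _ => trivial) (fun h _ => ⟨h, rfl⟩)
    rintro _ ⟨h, rfl⟩
    simp only [hφ]
  · rintro _ ⟨h, rfl⟩ _ ⟨h', rfl⟩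
    simp only [normalForm_mul_normalForm hak hn hlk, hφ]
  · simp [hak]
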